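/- arXiv:1210.3922 — 2 statements merged into one kernel-verified Lean document; each statement's English description precedes it below -/
import Mathlib

section
/- Let R be a fusion ring with basis B and fusion subsets S, T ⊆ B, with regular elements R_S = Σ_{d∈S} FPdim(d)·d and R_T = Σ_{e∈T} FPdim(e)·e in R ⊗ ℝ. Let Λ₁,…,Λ_l be the equivalence classes of the double-coset relation (X ∼ Y iff Y occurs in D·X·E for some D ∈ S, E ∈ T) and set A_i = Σ_{X ∈ Λ_i} FPdim(X)·X. Then R_S · A_i · R_T = FPdim(S)·FPdim(T)·A_i for each i, where FPdim(S) = Σ_{d∈S} FPdim(d)². -/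
open Finset

/-- A fusion ring with distinguished basis indexed by `ι`: nonnegative integer structure
constants `N`, unit basis element `one`, involution `star`, and the Frobenius–Perron
dimension `fp`, the (unique) ring homomorphism to `ℝ` positive on the basis. -/
structure FusionRing (ι : Type) [Fintype ι] [DecidableEq ι] where
  N : ι → ι → ι → ℕ
  one : ι
  star : ι → ι
  assoc : ∀ a b c d, ∑ x, N a b x * N x c d = ∑ x, N b c x * N a x d
  one_mul : ∀ a b, N one a b = if a = b then 1 else 0
  mul_one : ∀ a b, N a one b = if a = b then 1 else 0
  star_invol : ∀ a, star (star a) = a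
  N_one : ∀ a b, N a b one = if b = star a then 1 else 0
  N_star : ∀ a b c, N a b c = N (star b) (star a) (star c)
  fp : ι → ℝ
  fp_pos : ∀ a, 0 < fp a
  fp_one : fp one = 1
  fp_hom : ∀ a b, fp a * fp b = ∑ c, (N a b c : ℝ) * fp c

namespace FusionRing

variable {ι : Type} [Fintype ι] [DecidableEq ι] (R : FusionRing ι)

set_option linter.unusedVariables false
open scoped Classical

/-- Multiplication of `R ⊗ ℝ`, written on coefficient vectors in the basis `ι`. -/
noncomputable def mul (x y : ι → ℝ) : ι → ℝ :=
  fun c => ∑ a, ∑ b, x a * y b * (R.N a b c : ℝ)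

/-- The basis element `a` viewed as a coefficient vector. -/
def e (R : FusionRing ι) (a : ι) : ι → ℝ := fun c => if c = a then 1 else 0

/-- The linear extension of the involution `*`. -/
def starVec (x : ι → ℝ) : ι → ℝ := fun c => x (R.star c)

/-- The standard bilinear form, `m(a,b) = δ_{a,b}` on basis elements. -/
def m (R : FusionRing ι) (x y : ι → ℝ) : ℝ := ∑ a, x a * y a

/-- `S` is the basis of a fusion subring: contains the unit, closed under `*`, and closed
under taking constituents of products. -/
def IsFusionSubset (S : Finset ι) : Prop :=
  R.one ∈ S ∧ (∀ a ∈ S, R.star a ∈ S) ∧ ∀ a ∈ S, ∀ b ∈ S, ∀ c, 0 < R.N a b c → c ∈ S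

/-- The regular element `R_S = ∑_{d ∈ S} FPdim(d)·d` of a fusion subset `S`. -/
def reg (S : Finset ι) : ι → ℝ := fun c => if c ∈ S then R.fp c else 0

/-- `FPdim(S) = ∑_{d ∈ S} FPdim(d)²`. -/
def fpdimS (S : Finset ι) : ℝ := ∑ d ∈ S, R.fp d ^ 2

/-- The double coset relation relative to fusion subsets `S`, `T`:
`X ∼ Y` iff `Y` occurs with positive multiplicity in `D·X·E` for some `D ∈ S`, `E ∈ T`. -/
def dcRel (S T : Finset ι) (X Y : ι) : Prop :=
  ∃ D ∈ S, ∃ E ∈ T, 0 < ∑ a, R.N D X a * R.N a E Y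

/-- `A_i = ∑_{Y ∈ Λ_i} FPdim(Y)·Y` where `Λ_i` is the double coset of `X`. -/
noncomputable def classVec (S T : Finset ι) (X : ι) : ι → ℝ :=
  fun c => if R.dcRel S T X c then R.fp c else 0

end FusionRing

namespace FusionRing

variable {ι : Type} [Fintype ι] [DecidableEq ι] (R : FusionRing ι)

open scoped Classical

lemma key (a b c : ι) : R.N a b (R.star c) = R.N b c (R.star a) := by
  have h := R.assoc a b c R.one
  have h1 : ∀ x : ι, R.N x c R.one = if x = R.star c then 1 else 0 := by
    intro x; rw [R.N_one]
    congr 1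
    simp only [eq_iff_iff]
    constructor
    · intro hx; rw [hx, R.star_invol]
    · intro hx; rw [hx, R.star_invol]
  have h2 : ∀ x : ι, R.N a x R.one = if x = R.star a then 1 else 0 := fun x => R.N_one a x
  simp only [h1, h2, mul_ite, mul_one, mul_zero, Finset.sum_ite_eq', Finset.mem_univ,
    if_true, _root_.mul_one] at h
  exact h

lemma frob2 (a b c : ι) : R.N a b c = R.N c (R.star b) a := by
  have h1 : R.N a b c = R.N b (R.star c) (R.star a) := by
    have := R.key a b (R.star c)
    rwa [R.star_invol] at this
  rw [h1, R.N_star, R.star_invol, R.star_invol]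

lemma frob1 (a b c : ι) : R.N a b c = R.N (R.star a) c b := by
  rw [R.frob2 (R.star a) c b]
  have := R.key a b (R.star c)
  rwa [R.star_invol] at this

lemma sum_N_fp_right (a c : ι) :
    ∑ b, (R.N a b c : ℝ) * R.fp b = R.fp (R.star a) * R.fp c := by
  rw [R.fp_hom]
  exact Finset.sum_congr rfl fun b _ => by rw [← R.frob1]

lemma sum_N_fp_left (b c : ι) :
    ∑ a, (R.N a b c : ℝ) * R.fp a = R.fp c * R.fp (R.star b) := by
  rw [R.fp_hom]
  exact Finset.sum_congr rfl fun a _ => by rw [← R.frob2]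

lemma fp_star (a : ι) : R.fp (R.star a) = R.fp a := by
  have hpos : (0:ℝ) < ∑ c, R.fp c ^ 2 :=
    Finset.sum_pos (fun c _ => pow_pos (R.fp_pos c) 2) ⟨R.one, Finset.mem_univ _⟩
  refine mul_right_cancel₀ (ne_of_gt hpos) ?_
  calc R.fp (R.star a) * ∑ c, R.fp c ^ 2
      = ∑ c, (R.fp (R.star a) * R.fp c) * R.fp c := by
        rw [Finset.mul_sum]; exact Finset.sum_congr rfl fun c _ => by ring
    _ = ∑ c, (∑ b, (R.N a b c : ℝ) * R.fp b) * R.fp c :=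
        Finset.sum_congr rfl fun c _ => by rw [R.sum_N_fp_right]
    _ = ∑ c, ∑ b, ((R.N a b c : ℝ) * R.fp b) * R.fp c :=
        Finset.sum_congr rfl fun c _ => Finset.sum_mul _ _ _
    _ = ∑ b, ∑ c, ((R.N a b c : ℝ) * R.fp b) * R.fp c := Finset.sum_comm
    _ = ∑ b, (∑ c, (R.N a b c : ℝ) * R.fp c) * R.fp b := by
        refine Finset.sum_congr rfl fun b _ => ?_
        rw [Finset.sum_mul]
        exact Finset.sum_congr rfl fun c _ => by ring
    _ = ∑ b, (R.fp a * R.fp b) * R.fp b :=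
        Finset.sum_congr rfl fun b _ => by rw [← R.fp_hom]
    _ = R.fp a * ∑ c, R.fp c ^ 2 := by
        rw [Finset.mul_sum]; exact Finset.sum_congr rfl fun c _ => by ring

omit [DecidableEq ι] in
lemma nat_sum_pos_iff (f : ι → ℕ) : 0 < ∑ a, f a ↔ ∃ a, 0 < f a := by
  rw [pos_iff_ne_zero, Ne, Finset.sum_eq_zero_iff]
  push_neg
  simp [pos_iff_ne_zero]

lemma dcRel_symm {S T : Finset ι} (hS : R.IsFusionSubset S) (hT : R.IsFusionSubset T)
    {X Y : ι} (h : R.dcRel S T X Y) : R.dcRel S T Y X := by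
  obtain ⟨D, hD, E, hE, hpos⟩ := h
  obtain ⟨a, ha⟩ := (nat_sum_pos_iff _).1 hpos
  have h1 : 0 < R.N D X a := Nat.pos_of_ne_zero fun h0 => by simp [h0] at ha
  have h2 : 0 < R.N a E Y := Nat.pos_of_ne_zero fun h0 => by simp [h0] at ha
  refine ⟨R.star D, hS.2.1 D hD, R.star E, hT.2.1 E hE, ?_⟩
  rw [R.assoc]
  refine (nat_sum_pos_iff _).2 ⟨a, Nat.mul_pos ?_ ?_⟩
  · rw [← R.frob2]; exact h2
  · rw [← R.frob1]; exact h1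

lemma dcRel_trans {S T : Finset ι} (hS : R.IsFusionSubset S) (hT : R.IsFusionSubset T)
    {X Y Z : ι} (h1 : R.dcRel S T X Y) (h2 : R.dcRel S T Y Z) : R.dcRel S T X Z := by
  obtain ⟨D, hD, E, hE, p1⟩ := h1
  obtain ⟨D', hD', E', hE', p2⟩ := h2
  have key : ∑ Y', (∑ a, R.N D X a * R.N a E Y') * (∑ b, R.N D' Y' b * R.N b E' Z)
      = ∑ f, ∑ g, R.N D' D f * R.N E E' g * ∑ x, R.N f X x * R.N x g Z := by
    calc ∑ Y', (∑ a, R.N D X a * R.N a E Y') * (∑ b, R.N D' Y' b * R.N b E' Z)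
        = ∑ Y', ∑ a, ∑ b, (R.N D X a * R.N a E Y') * (R.N D' Y' b * R.N b E' Z) :=
          Finset.sum_congr rfl fun Y' _ => Finset.sum_mul_sum _ _ _ _
      _ = ∑ a, ∑ Y', ∑ b, (R.N D X a * R.N a E Y') * (R.N D' Y' b * R.N b E' Z) :=
          Finset.sum_comm
      _ = ∑ a, ∑ b, ∑ Y', (R.N D X a * R.N a E Y') * (R.N D' Y' b * R.N b E' Z) :=
          Finset.sum_congr rfl fun a _ => Finset.sum_comm
      _ = ∑ a, ∑ b, (R.N D X a * R.N b E' Z) * ∑ Y', R.N a E Y' * R.N D' Y' b := by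
          refine Finset.sum_congr rfl fun a _ => Finset.sum_congr rfl fun b _ => ?_
          rw [Finset.mul_sum]
          exact Finset.sum_congr rfl fun Y' _ => by ring
      _ = ∑ a, ∑ b, (R.N D X a * R.N b E' Z) * ∑ x, R.N D' a x * R.N x E b := by
          refine Finset.sum_congr rfl fun a _ => Finset.sum_congr rfl fun b _ => ?_
          rw [R.assoc D' a E b]
      _ = ∑ a, ∑ b, ∑ x, (R.N D X a * R.N D' a x) * (R.N x E b * R.N b E' Z) := by
          refine Finset.sum_congr rfl fun a _ => Finset.sum_congr rfl fun b _ => ?_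
          rw [Finset.mul_sum]
          exact Finset.sum_congr rfl fun x _ => by ring
      _ = ∑ a, ∑ x, ∑ b, (R.N D X a * R.N D' a x) * (R.N x E b * R.N b E' Z) :=
          Finset.sum_congr rfl fun a _ => Finset.sum_comm
      _ = ∑ x, ∑ a, ∑ b, (R.N D X a * R.N D' a x) * (R.N x E b * R.N b E' Z) :=
          Finset.sum_comm
      _ = ∑ x, (∑ a, R.N D X a * R.N D' a x) * (∑ b, R.N x E b * R.N b E' Z) :=
          Finset.sum_congr rfl fun x _ => (Finset.sum_mul_sum _ _ _ _).symm
      _ = ∑ x, (∑ f, R.N D' D f * R.N f X x) * (∑ g, R.N E E' g * R.N x g Z) := by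
          refine Finset.sum_congr rfl fun x _ => ?_
          rw [← R.assoc D' D X x, R.assoc x E E' Z]
      _ = ∑ x, ∑ f, ∑ g, (R.N D' D f * R.N f X x) * (R.N E E' g * R.N x g Z) :=
          Finset.sum_congr rfl fun x _ => Finset.sum_mul_sum _ _ _ _
      _ = ∑ f, ∑ x, ∑ g, (R.N D' D f * R.N f X x) * (R.N E E' g * R.N x g Z) :=
          Finset.sum_comm
      _ = ∑ f, ∑ g, ∑ x, (R.N D' D f * R.N f X x) * (R.N E E' g * R.N x g Z) :=
          Finset.sum_congr rfl fun f _ => Finset.sum_comm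
      _ = ∑ f, ∑ g, R.N D' D f * R.N E E' g * ∑ x, R.N f X x * R.N x g Z := by
          refine Finset.sum_congr rfl fun f _ => Finset.sum_congr rfl fun g _ => ?_
          rw [Finset.mul_sum]
          exact Finset.sum_congr rfl fun x _ => by ring
  have hL : 0 < ∑ Y', (∑ a, R.N D X a * R.N a E Y') * (∑ b, R.N D' Y' b * R.N b E' Z) :=
    (nat_sum_pos_iff _).2 ⟨Y, Nat.mul_pos p1 p2⟩
  rw [key] at hL
  obtain ⟨f, hf⟩ := (nat_sum_pos_iff _).1 hL
  obtain ⟨g, hg⟩ := (nat_sum_pos_iff _).1 hf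
  have hfS : 0 < R.N D' D f := Nat.pos_of_ne_zero fun h0 => by simp [h0] at hg
  have hgT : 0 < R.N E E' g := Nat.pos_of_ne_zero fun h0 => by simp [h0] at hg
  have hsum : 0 < ∑ x, R.N f X x * R.N x g Z :=
    Nat.pos_of_ne_zero fun h0 => by simp [h0] at hg
  exact ⟨f, hS.2.2 D' hD' D hD f hfS, g, hT.2.2 E hE E' hE' g hgT, hsum⟩

lemma dcRel_of_N_left {S T : Finset ι} (hT : R.IsFusionSubset T) {d Y c : ι} (hd : d ∈ S)
    (h : 0 < R.N d Y c) : R.dcRel S T Y c := by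
  refine ⟨d, hd, R.one, hT.1, (nat_sum_pos_iff _).2 ⟨c, ?_⟩⟩
  rw [R.mul_one, if_pos rfl, _root_.mul_one]
  exact h

lemma dcRel_of_N_right {S T : Finset ι} (hS : R.IsFusionSubset S) {Y e c : ι} (he : e ∈ T)
    (h : 0 < R.N Y e c) : R.dcRel S T Y c := by
  refine ⟨R.one, hS.1, e, he, (nat_sum_pos_iff _).2 ⟨Y, ?_⟩⟩
  rw [R.one_mul, if_pos rfl, _root_.one_mul]
  exact h

lemma mul_smul_left (r : ℝ) (x y : ι → ℝ) : R.mul (r • x) y = r • R.mul x y := by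
  funext c
  simp only [mul, Pi.smul_apply, smul_eq_mul, Finset.mul_sum]
  exact Finset.sum_congr rfl fun a _ => Finset.sum_congr rfl fun b _ => by ring

lemma reg_mul_classVec {S T : Finset ι} (hS : R.IsFusionSubset S) (hT : R.IsFusionSubset T)
    (X : ι) : R.mul (R.reg S) (R.classVec S T X) = R.fpdimS S • R.classVec S T X := by
  funext c
  simp only [mul, reg, classVec, fpdimS, Pi.smul_apply, smul_eq_mul]
  by_cases hc : R.dcRel S T X c
  · rw [if_pos hc]
    have inner : ∀ d ∈ S, ∑ Y, (if R.dcRel S T X Y then R.fp Y else 0) * (R.N d Y c : ℝ)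
        = R.fp d * R.fp c := by
      intro d hd
      have hterm : ∀ Y, (if R.dcRel S T X Y then R.fp Y else 0) * (R.N d Y c : ℝ)
          = (R.N d Y c : ℝ) * R.fp Y := by
        intro Y
        by_cases hY : R.dcRel S T X Y
        · rw [if_pos hY, mul_comm]
        · rw [if_neg hY, zero_mul]
          have hN : R.N d Y c = 0 := by
            by_contra h0
            exact hY (R.dcRel_trans hS hT hc
              (R.dcRel_symm hS hT (R.dcRel_of_N_left hT hd (Nat.pos_of_ne_zero h0))))
          rw [hN, Nat.cast_zero, zero_mul]
      rw [Finset.sum_congr rfl fun Y _ => hterm Y, R.sum_N_fp_right, R.fp_star]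
    calc ∑ d, ∑ Y, (if d ∈ S then R.fp d else 0) *
            (if R.dcRel S T X Y then R.fp Y else 0) * (R.N d Y c : ℝ)
        = ∑ d, (if d ∈ S then R.fp d else 0) *
            ∑ Y, (if R.dcRel S T X Y then R.fp Y else 0) * (R.N d Y c : ℝ) := by
          refine Finset.sum_congr rfl fun d _ => ?_
          rw [Finset.mul_sum]
          exact Finset.sum_congr rfl fun Y _ => mul_assoc _ _ _
      _ = ∑ d, (if d ∈ S then R.fp d * (R.fp d * R.fp c) else 0) := by
          refine Finset.sum_congr rfl fun d _ => ?_
          by_cases hd : d ∈ S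
          · rw [if_pos hd, if_pos hd, inner d hd]
          · rw [if_neg hd, if_neg hd, zero_mul]
      _ = ∑ d ∈ S, R.fp d * (R.fp d * R.fp c) := by
          rw [Finset.sum_ite_mem, Finset.univ_inter]
      _ = (∑ d ∈ S, R.fp d ^ 2) * R.fp c := by
          rw [Finset.sum_mul]
          exact Finset.sum_congr rfl fun d _ => by ring
  · rw [if_neg hc, mul_zero]
    refine Finset.sum_eq_zero fun d _ => Finset.sum_eq_zero fun Y _ => ?_
    by_cases hd : d ∈ S
    · by_cases hY : R.dcRel S T X Y
      · have hN : R.N d Y c = 0 := by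
          by_contra h0
          exact hc (R.dcRel_trans hS hT hY (R.dcRel_of_N_left hT hd (Nat.pos_of_ne_zero h0)))
        rw [hN, Nat.cast_zero, mul_zero]
      · rw [if_neg hY, mul_zero, zero_mul]
    · rw [if_neg hd, zero_mul, zero_mul]

lemma classVec_mul_reg {S T : Finset ι} (hS : R.IsFusionSubset S) (hT : R.IsFusionSubset T)
    (X : ι) : R.mul (R.classVec S T X) (R.reg T) = R.fpdimS T • R.classVec S T X := by
  funext c
  simp only [mul, reg, classVec, fpdimS, Pi.smul_apply, smul_eq_mul]
  rw [Finset.sum_comm]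
  by_cases hc : R.dcRel S T X c
  · rw [if_pos hc]
    have inner : ∀ e ∈ T, ∑ Y, (if R.dcRel S T X Y then R.fp Y else 0) * (R.N Y e c : ℝ)
        = R.fp c * R.fp e := by
      intro e he
      have hterm : ∀ Y, (if R.dcRel S T X Y then R.fp Y else 0) * (R.N Y e c : ℝ)
          = (R.N Y e c : ℝ) * R.fp Y := by
        intro Y
        by_cases hY : R.dcRel S T X Y
        · rw [if_pos hY, mul_comm]
        · rw [if_neg hY, zero_mul]
          have hN : R.N Y e c = 0 := by
            by_contra h0
            exact hY (R.dcRel_trans hS hT hc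
              (R.dcRel_symm hS hT (R.dcRel_of_N_right hS he (Nat.pos_of_ne_zero h0))))
          rw [hN, Nat.cast_zero, zero_mul]
      rw [Finset.sum_congr rfl fun Y _ => hterm Y, R.sum_N_fp_left, R.fp_star]
    calc ∑ e, ∑ Y, (if R.dcRel S T X Y then R.fp Y else 0) *
            (if e ∈ T then R.fp e else 0) * (R.N Y e c : ℝ)
        = ∑ e, (if e ∈ T then R.fp e else 0) *
            ∑ Y, (if R.dcRel S T X Y then R.fp Y else 0) * (R.N Y e c : ℝ) := by
          refine Finset.sum_congr rfl fun e _ => ?_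
          rw [Finset.mul_sum]
          exact Finset.sum_congr rfl fun Y _ => by ring
      _ = ∑ e, (if e ∈ T then R.fp e * (R.fp c * R.fp e) else 0) := by
          refine Finset.sum_congr rfl fun e _ => ?_
          by_cases he : e ∈ T
          · rw [if_pos he, if_pos he, inner e he]
          · rw [if_neg he, if_neg he, zero_mul]
      _ = ∑ e ∈ T, R.fp e * (R.fp c * R.fp e) := by
          rw [Finset.sum_ite_mem, Finset.univ_inter]
      _ = (∑ e ∈ T, R.fp e ^ 2) * R.fp c := by
          rw [Finset.sum_mul]
          exact Finset.sum_congr rfl fun e _ => by ring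
  · rw [if_neg hc, mul_zero]
    refine Finset.sum_eq_zero fun e _ => Finset.sum_eq_zero fun Y _ => ?_
    by_cases he : e ∈ T
    · by_cases hY : R.dcRel S T X Y
      · have hN : R.N Y e c = 0 := by
          by_contra h0
          exact hc (R.dcRel_trans hS hT hY (R.dcRel_of_N_right hS he (Nat.pos_of_ne_zero h0)))
        rw [hN, Nat.cast_zero, mul_zero]
      · rw [if_neg hY, zero_mul, zero_mul]
    · rw [if_neg he, mul_zero, zero_mul]

end FusionRing


/-- Each `A_i = ∑_{Y ∈ Λ_i} FPdim(Y)·Y`, for `Λ_i` a double coset relative to fusion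
subsets `S`, `T`, is an eigenvector of `x ↦ R_S·x·R_T` with eigenvalue
`FPdim(S)·FPdim(T)`. -/
theorem classVec_eigen {ι : Type} [Fintype ι] [DecidableEq ι] (R : FusionRing ι)
    (S T : Finset ι) (hS : R.IsFusionSubset S) (hT : R.IsFusionSubset T) (X : ι) :
    R.mul (R.mul (R.reg S) (R.classVec S T X)) (R.reg T) =
      (R.fpdimS S * R.fpdimS T) • R.classVec S T X := by
  rw [R.reg_mul_classVec hS hT X, R.mul_smul_left, R.classVec_mul_reg hS hT X, smul_smul]
end

section
/- Let R, R' be fusion rings and F : R → R' a ring homomorphism sending basis elements to nonnegative combinations of basis elements and commuting with *. If X, Y are basis elements of R such that every constituent of X·Y lies in ker F = { Z ∈ B : F(Z) = FPdim(Z)·1 }, then F(X)/FPdim(X) = M and F(Y)/FPdim(Y) = M* for a single invertible basis element M of R' (i.e., M with FPdim(M) = 1). -/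
open Finset

namespace FusionRing

variable {ι : Type} [Fintype ι] [DecidableEq ι] (R : FusionRing ι)

set_option linter.unusedVariables false
open scoped Classical

lemma star_inj : Function.Injective R.star := fun a b h => by
  rw [← R.star_invol a, h, R.star_invol]

lemma N_cyc (a b c : ι) : R.N a b c = R.N b (R.star c) (R.star a) := by
  have h := R.assoc a b (R.star c) R.one
  have hL : ∑ x, R.N a b x * R.N x (R.star c) R.one = R.N a b c := by
    rw [Finset.sum_eq_single c]
    · rw [R.N_one, if_pos rfl, _root_.mul_one]
    · intro x _ hx
      rw [R.N_one, if_neg, mul_zero]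
      intro he
      exact hx (R.star_inj he).symm
    · simp
  have hR : ∑ x, R.N b (R.star c) x * R.N a x R.one = R.N b (R.star c) (R.star a) := by
    rw [Finset.sum_eq_single (R.star a)]
    · rw [R.N_one, if_pos rfl, _root_.mul_one]
    · intro x _ hx; rw [R.N_one, if_neg hx, mul_zero]
    · simp
  rw [← hL, h, hR]

lemma N_dual (a b c : ι) : R.N (R.star a) c b = R.N a b c := by
  rw [R.N_cyc (R.star a) c b, R.star_invol]
  rw [R.N_star c (R.star b) a, R.star_invol]
  exact (R.N_cyc a b c).symm

end FusionRing

/-- Let `F : R → R'` be a ring homomorphism between fusion rings preserving positivity,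
the involution and `FPdim`. If `X`, `Y` are basis elements of `R` such that every
constituent of `X·Y` lies in `ker F = { Z : F(Z) = FPdim(Z)·1 }`, then
`F(X)/FPdim(X) = M` and `F(Y)/FPdim(Y) = M*` for a single invertible basis element `M`
of `R'`. -/
theorem ker_product_image {ι ι' : Type} [Fintype ι] [DecidableEq ι]
    [Fintype ι'] [DecidableEq ι']
    (R : FusionRing ι) (R' : FusionRing ι')
    (Fm : ι → ι' → ℝ)
    (hF_nonneg : ∀ a c, 0 ≤ Fm a c)
    (hF_one : Fm R.one = R'.e R'.one)
    (hF_mul : ∀ a b, R'.mul (Fm a) (Fm b) = fun c' => ∑ c, (R.N a b c : ℝ) * Fm c c')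
    (hF_star : ∀ a c, Fm (R.star a) c = Fm a (R'.star c))
    (hF_fp : ∀ a, ∑ c, Fm a c * R'.fp c = R.fp a)
    (X Y : ι)
    (hXY : ∀ Z, 0 < R.N X Y Z → Fm Z = R.fp Z • R'.e R'.one) :
    ∃ M : ι',
      (∀ c, R'.N M (R'.star M) c = if c = R'.one then 1 else 0) ∧
      Fm X = R.fp X • R'.e M ∧ Fm Y = R.fp Y • R'.e (R'.star M) := by
  classical
  -- The product F(X)·F(Y) is a multiple of the unit.
  have hprod : ∀ c', (∑ a, ∑ b, Fm X a * Fm Y b * (R'.N a b c' : ℝ))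
      = if c' = R'.one then R.fp X * R.fp Y else 0 := by
    intro c'
    have h1 : (∑ a, ∑ b, Fm X a * Fm Y b * (R'.N a b c' : ℝ))
        = ∑ c, (R.N X Y c : ℝ) * Fm c c' := congrFun (hF_mul X Y) c'
    have h2 : ∀ c, (R.N X Y c : ℝ) * Fm c c'
        = (if c' = R'.one then 1 else 0) * ((R.N X Y c : ℝ) * R.fp c) := by
      intro c
      rcases Nat.eq_zero_or_pos (R.N X Y c) with h | h
      · simp [h]
      · rw [hXY c h]
        by_cases hc : c' = R'.one <;>
          simp [FusionRing.e, hc] <;> ring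
    rw [h1, Finset.sum_congr rfl fun c _ => h2 c, ← Finset.mul_sum,
      ← (R.fp_hom X Y)]
    by_cases hc : c' = R'.one <;> simp [hc]
  -- all terms for c' ≠ 1 vanish
  have hzero : ∀ c', c' ≠ R'.one → ∀ a b, Fm X a * Fm Y b * (R'.N a b c' : ℝ) = 0 := by
    intro c' hc a b
    have hs := hprod c'
    rw [if_neg hc] at hs
    have houter : ∀ a ∈ Finset.univ (α := ι'),
        (0:ℝ) ≤ ∑ b, Fm X a * Fm Y b * (R'.N a b c' : ℝ) := by
      intro a _
      exact Finset.sum_nonneg fun b _ =>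
        mul_nonneg (mul_nonneg (hF_nonneg X a) (hF_nonneg Y b)) (Nat.cast_nonneg _)
    have h2 := (Finset.sum_eq_zero_iff_of_nonneg houter).mp hs a (Finset.mem_univ a)
    have hinner : ∀ b ∈ Finset.univ (α := ι'),
        (0:ℝ) ≤ Fm X a * Fm Y b * (R'.N a b c' : ℝ) := fun b _ =>
      mul_nonneg (mul_nonneg (hF_nonneg X a) (hF_nonneg Y b)) (Nat.cast_nonneg _)
    exact (Finset.sum_eq_zero_iff_of_nonneg hinner).mp h2 b (Finset.mem_univ b)
  -- key: positive coefficients pair up by star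
  have key : ∀ a b, 0 < Fm X a → 0 < Fm Y b → b = R'.star a := by
    intro a b hxa hyb
    have hN : ∀ c, c ≠ R'.one → (R'.N a b c : ℝ) = 0 := by
      intro c hc
      by_contra hne
      have hpos : 0 < (R'.N a b c : ℝ) :=
        lt_of_le_of_ne (Nat.cast_nonneg _) (Ne.symm hne)
      have := hzero c hc a b
      nlinarith [mul_pos (mul_pos hxa hyb) hpos]
    have hsum : R'.fp a * R'.fp b = (R'.N a b R'.one : ℝ) * R'.fp R'.one := by
      rw [R'.fp_hom a b, Finset.sum_eq_single R'.one]
      · intro c _ hc; rw [hN c hc, zero_mul]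
      · simp
    rw [R'.N_one, R'.fp_one] at hsum
    by_contra hb
    rw [if_neg hb] at hsum
    simp only [Nat.cast_zero, zero_mul] at hsum
    exact absurd hsum (ne_of_gt (mul_pos (R'.fp_pos a) (R'.fp_pos b)))
  -- find a positive coefficient of F(Y)
  have hyex : ∃ b, 0 < Fm Y b := by
    by_contra h
    push_neg at h
    have hz : ∀ b, Fm Y b = 0 := fun b => le_antisymm (h b) (hF_nonneg Y b)
    have hfy := hF_fp Y
    simp only [hz, zero_mul, Finset.sum_const_zero] at hfy
    exact absurd hfy.symm (ne_of_gt (R.fp_pos Y))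
  obtain ⟨b₀, hb₀⟩ := hyex
  set M := R'.star b₀ with hM
  have hb₀M : b₀ = R'.star M := by rw [hM, R'.star_invol]
  -- support of F(X) is {M}
  have hxsupp : ∀ a, 0 < Fm X a → a = M := by
    intro a ha
    have h := key a b₀ ha hb₀
    rw [hM, h, R'.star_invol]
  have hx0 : ∀ c, c ≠ M → Fm X c = 0 := by
    intro c hc
    by_contra h
    exact hc (hxsupp c (lt_of_le_of_ne (hF_nonneg X c) (Ne.symm h)))
  have hxM : Fm X M * R'.fp M = R.fp X := by
    rw [← hF_fp X, Finset.sum_eq_single M]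
    · intro c _ hc; rw [hx0 c hc, zero_mul]
    · simp
  have hxMpos : 0 < Fm X M := by
    rcases lt_or_eq_of_le (hF_nonneg X M) with h | h
    · exact h
    · exfalso
      rw [← h, zero_mul] at hxM
      exact absurd hxM.symm (ne_of_gt (R.fp_pos X))
  -- support of F(Y) is {star M}
  have hy0 : ∀ c, c ≠ R'.star M → Fm Y c = 0 := by
    intro c hc
    by_contra h
    exact hc (key M c hxMpos (lt_of_le_of_ne (hF_nonneg Y c) (Ne.symm h)))
  have hyM : Fm Y (R'.star M) * R'.fp (R'.star M) = R.fp Y := by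
    rw [← hF_fp Y, Finset.sum_eq_single (R'.star M)]
    · intro c _ hc; rw [hy0 c hc, zero_mul]
    · simp
  have hyMpos : 0 < Fm Y (R'.star M) := hb₀M ▸ hb₀
  -- invertibility of M
  have hNM : ∀ c, R'.N M (R'.star M) c = if c = R'.one then 1 else 0 := by
    intro c
    by_cases hc : c = R'.one
    · rw [hc, if_pos rfl, R'.N_one, if_pos rfl]
    · rw [if_neg hc]
      have hNr : (R'.N M (R'.star M) c : ℝ) = 0 := by
        by_contra hne
        have hpos : 0 < (R'.N M (R'.star M) c : ℝ) :=
          lt_of_le_of_ne (Nat.cast_nonneg _) (Ne.symm hne)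
        have := hzero c hc M (R'.star M)
        nlinarith [mul_pos (mul_pos hxMpos hyMpos) hpos]
      exact_mod_cast hNr
  -- FPdim of M is 1
  have hfp1 : R'.fp M * R'.fp (R'.star M) = 1 := by
    rw [R'.fp_hom, Finset.sum_eq_single R'.one]
    · rw [hNM R'.one, if_pos rfl, R'.fp_one]; norm_num
    · intro c _ hc; rw [hNM c, if_neg hc]; norm_num
    · simp
  have hfpM : R'.fp M = 1 := by
    have hst := R'.fp_star M
    rw [hst] at hfp1
    nlinarith [R'.fp_pos M]
  have hfpMs : R'.fp (R'.star M) = 1 := by rw [R'.fp_star M, hfpM]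
  refine ⟨M, hNM, ?_, ?_⟩
  · funext c
    show Fm X c = R.fp X * (if c = M then 1 else 0)
    by_cases hc : c = M
    · rw [hc, if_pos rfl, mul_one, ← hxM, hfpM, mul_one]
    · rw [if_neg hc, mul_zero]; exact hx0 c hc
  · funext c
    show Fm Y c = R.fp Y * (if c = R'.star M then 1 else 0)
    by_cases hc : c = R'.star M
    · rw [hc, if_pos rfl, mul_one, ← hyM, hfpMs, mul_one]
    · rw [if_neg hc, mul_zero]; exact hy0 c hc
end
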